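/- arXiv:2604.08054 — 4 statements merged into one kernel-verified Lean document; each statement's English description precedes it below -/
import Mathlib

section
/- Let θ₁,…,θ_d and Θ₁,…,Θ_d be real numbers with |θᵢ − θⱼ| < π/2 and |Θᵢ − Θⱼ| < π/2 for all i, j. Then 0 is not in the convex hull of {e^{i(θᵢ + Θⱼ)} : 1 ≤ i, j ≤ d} ⊂ ℂ. -/
open Complex Real

theorem zero_not_mem_hull_of_phase_sums (d : ℕ) (θ Θ : Fin d → ℝ)
    (hθ : ∀ i j, |θ i - θ j| < π / 2)
    (hΘ : ∀ i j, |Θ i - Θ j| < π / 2) :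
    (0 : ℂ) ∉ convexHull ℝ
      {z : ℂ | ∃ i j, z = Complex.exp (Complex.I * (θ i + Θ j))} := by
  rcases Nat.eq_zero_or_pos d with hd | hd
  · subst hd
    have hset : {z : ℂ | ∃ i j, z = Complex.exp (Complex.I * (θ i + Θ j))} = ∅ := by
      ext z; simp
    rw [hset, convexHull_empty]
    exact Set.notMem_empty _
  · haveI : Nonempty (Fin d) := ⟨⟨0, hd⟩⟩
    obtain ⟨ia, hia⟩ := Finite.exists_max θ
    obtain ⟨ib, hib⟩ := Finite.exists_min θ
    obtain ⟨ja, hja⟩ := Finite.exists_max Θ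
    obtain ⟨jb, hjb⟩ := Finite.exists_min Θ
    set c : ℝ := (θ ia + θ ib) / 2 + (Θ ja + Θ jb) / 2 with hc
    have hθb : ∀ i, |θ i - (θ ia + θ ib) / 2| < π / 4 := by
      intro i
      have h1 : θ ia - θ ib < π / 2 := (abs_lt.mp (hθ ia ib)).2
      rw [abs_lt]
      constructor <;> nlinarith [hia i, hib i]
    have hΘb : ∀ j, |Θ j - (Θ ja + Θ jb) / 2| < π / 4 := by
      intro j
      have h1 : Θ ja - Θ jb < π / 2 := (abs_lt.mp (hΘ ja jb)).2
      rw [abs_lt]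
      constructor <;> nlinarith [hja j, hjb j]
    set w : ℂ := Complex.exp (-(Complex.I * c)) with hw
    have hlin : IsLinearMap ℝ (fun z : ℂ => (z * w).re) := by
      constructor
      · intro x y; simp [add_mul]
      · intro r x; simp [Complex.real_smul, mul_assoc]
    have hsub : {z : ℂ | ∃ i j, z = Complex.exp (Complex.I * (θ i + Θ j))} ⊆
        {z : ℂ | (0 : ℝ) < (z * w).re} := by
      rintro z ⟨i, j, rfl⟩
      have hkey : (Complex.exp (Complex.I * (θ i + Θ j)) * w).re
          = Real.cos (θ i + Θ j - c) := by
        rw [hw, ← Complex.exp_add]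
        have : Complex.I * (↑(θ i) + ↑(Θ j)) + -(Complex.I * ↑c)
            = ↑(θ i + Θ j - c) * Complex.I := by push_cast; ring
        rw [this, Complex.exp_ofReal_mul_I_re]
      simp only [Set.mem_setOf_eq, hkey]
      apply Real.cos_pos_of_mem_Ioo
      constructor
      · have := (abs_lt.mp (hθb i)).1
        have := (abs_lt.mp (hΘb j)).1
        rw [hc]; linarith
      · have := (abs_lt.mp (hθb i)).2
        have := (abs_lt.mp (hΘb j)).2
        rw [hc]; linarith
    intro h0
    have := convexHull_min hsub (convex_halfSpace_gt hlin 0) h0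
    simp at this
end

section
/- Suppose θ₁,…,θ_d, Θ₁,…,Θ_d ∈ ℝ are such that 0 lies in the convex hull of {e^{i(θᵢ+Θⱼ)}}ᵢ,ⱼ (global distinguishability). Then 0 lies in the convex hull of {e^{i(θᵢ−θⱼ)}}ᵢ,ⱼ or 0 lies in the convex hull of {e^{i(Θᵢ−Θⱼ)}}ᵢ,ⱼ. -/
open Complex Real

open ComplexConjugate

/- Contrapositive. If `0` is not in the hull of the `e^{i(φᵢ - φⱼ)}`, then every
`cos (φᵢ - φⱼ)` is positive (otherwise `1`, `e^{±i(φᵢ - φⱼ)}` already have `0` in their hull),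
so the phases `φᵢ` lie modulo `2π` within `π/4` of a common centre. Doing this for `θ` and `Θ`
puts all `θᵢ + Θⱼ` within `π/2` of one direction, i.e. the `e^{i(θᵢ + Θⱼ)}` lie in an open
half-plane, a convex set missing `0`. -/

theorem Complex.re_exp_I_mul_ofReal (x : ℝ) : (exp (I * x)).re = Real.cos x := by
  rw [mul_comm, exp_ofReal_mul_I_re]

theorem Convex.zero_mem_of_re_nonpos {C : Set ℂ} (hC : Convex ℝ C) {z : ℂ} (h1 : 1 ∈ C)
    (hz : z ∈ C) (hz' : conj z ∈ C) (hre : z.re ≤ 0) : (0 : ℂ) ∈ C := by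
  have hre_mem : (z.re : ℂ) ∈ C := by
    rw [Complex.re_eq_add_conj, add_div]
    convert hC hz hz' (a := 1 / 2) (b := 1 / 2) (by norm_num) (by norm_num) (by norm_num) using 1
    simp only [Complex.real_smul]
    push_cast
    ring
  have h0 : (0 : ℂ) ∈ ofRealLI.toLinearMap.toAffineMap '' segment ℝ z.re 1 :=
    ⟨0, by rw [segment_eq_Icc (by linarith)]; exact ⟨hre, zero_le_one⟩, by simp⟩
  rw [image_segment] at h0
  exact hC.segment_subset hre_mem h1 (by simpa using h0)

theorem cos_sub_pos_of_zero_notMem_convexHull {ι : Type*} (φ : ι → ℝ)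
    (h : (0 : ℂ) ∉ convexHull ℝ {z : ℂ | ∃ i j, z = exp (I * (φ i - φ j))}) (i j : ι) :
    0 < Real.cos (φ i - φ j) := by
  by_contra! hc
  refine h <| (convex_convexHull ℝ _).zero_mem_of_re_nonpos (z := exp (I * (φ i - φ j)))
    (subset_convexHull ℝ _ ⟨i, i, by simp⟩) (subset_convexHull ℝ _ ⟨i, j, rfl⟩)
    (subset_convexHull ℝ _ ⟨j, i, ?_⟩) ?_
  · rw [← Complex.exp_conj]
    simp only [map_mul, map_sub, conj_I, conj_ofReal]
    ring_nf
  · rwa [← ofReal_sub, re_exp_I_mul_ofReal]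

theorem exists_forall_abs_sub_lt_half_of_abs_sub_lt {ι : Type*} [Finite ι] {α : ι → ℝ} {w : ℝ}
    (h : ∀ i j, |α i - α j| < w) : ∃ m, ∀ i, |α i - m| < w / 2 := by
  rcases isEmpty_or_nonempty ι with _ | _
  · exact ⟨0, fun i => isEmptyElim i⟩
  obtain ⟨iMax, hMax⟩ := Finite.exists_max α
  obtain ⟨iMin, hMin⟩ := Finite.exists_min α
  refine ⟨(α iMax + α iMin) / 2, fun i => ?_⟩
  have hw := (abs_lt.1 (h iMax iMin)).2
  have := hMax i
  have := hMin i
  rw [abs_lt]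
  constructor <;> linarith

theorem exists_forall_cos_pi_div_four_lt_cos_sub_of_cos_sub_pos {ι : Type*} [Finite ι]
    (φ : ι → ℝ) (h : ∀ i j, 0 < Real.cos (φ i - φ j)) :
    ∃ c, ∀ i, Real.cos (π / 4) < Real.cos (φ i - c) := by
  rcases isEmpty_or_nonempty ι with _ | ⟨⟨i₀⟩⟩
  · exact ⟨0, fun i => isEmptyElim i⟩
  have cos_congr {a b : ℝ} (hab : (a : Angle) = b) : Real.cos a = Real.cos b := by
    rw [← Angle.cos_coe, hab, Angle.cos_coe]
  set α : ι → ℝ := fun i => ((φ i - φ i₀ : ℝ) : Angle).toReal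
  have hα_coe (i : ι) : (α i : Angle) = (φ i - φ i₀ : ℝ) := Angle.coe_toReal _
  have hα_abs (i : ι) : |α i| < π / 2 := by
    rw [← Angle.cos_pos_iff_abs_toReal_lt_pi_div_two, Angle.cos_coe]
    exact h i i₀
  have hα_sub (i j : ι) : |α i - α j| < π / 2 := by
    have hlt : |α i - α j| < π := by
      linarith [abs_sub (α i) (α j), hα_abs i, hα_abs j]
    have hcos : 0 < Angle.cos (α i - α j : ℝ) := by
      have hcongr : ((α i - α j : ℝ) : Angle) = (φ i - φ j : ℝ) := by
        rw [Angle.coe_sub, hα_coe, hα_coe, ← Angle.coe_sub]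
        congr 1
        ring
      rw [Angle.cos_coe, cos_congr hcongr]
      exact h i j
    rwa [Angle.cos_pos_iff_abs_toReal_lt_pi_div_two,
      Angle.toReal_coe_eq_self_iff.2 ⟨by linarith [(abs_lt.1 hlt).1], (abs_lt.1 hlt).2.le⟩] at hcos
  obtain ⟨m, hm⟩ := exists_forall_abs_sub_lt_half_of_abs_sub_lt hα_sub
  refine ⟨φ i₀ + m, fun i => ?_⟩
  have hmi : |α i - m| < π / 4 := by linarith [hm i]
  have hcongr : ((α i - m : ℝ) : Angle) = (φ i - (φ i₀ + m) : ℝ) := by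
    rw [Angle.coe_sub, hα_coe, ← Angle.coe_sub]
    congr 1
    ring
  rw [← cos_congr hcongr, ← Real.cos_abs (α i - m)]
  exact Real.cos_lt_cos_of_nonneg_of_le_pi_div_two (abs_nonneg _) (by linarith [pi_pos]) hmi

theorem cos_add_pos_of_cos_pi_div_four_lt {x y : ℝ} (hx : Real.cos (π / 4) < Real.cos x)
    (hy : Real.cos (π / 4) < Real.cos y) : 0 < Real.cos (x + y) := by
  rw [Real.cos_pi_div_four] at hx hy
  have hsq : (√2 / 2) ^ 2 = 1 / 2 := by
    rw [div_pow, Real.sq_sqrt zero_le_two]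
    norm_num
  have hcos : 1 / 2 < Real.cos x * Real.cos y := by
    nlinarith [show 0 < √2 / 2 by positivity]
  have hsin : 2 * (Real.sin x * Real.sin y) < 1 := by
    nlinarith [sq_nonneg (Real.sin x - Real.sin y), Real.sin_sq_add_cos_sq x,
      Real.sin_sq_add_cos_sq y]
  rw [Real.cos_add]
  linarith

theorem zero_notMem_convexHull_of_re_mul_pos {S : Set ℂ} (u : ℂ) (h : ∀ z ∈ S, 0 < (z * u).re) :
    (0 : ℂ) ∉ convexHull ℝ S := fun h0 => by
  have hconv : Convex ℝ {z : ℂ | 0 < (z * u).re} :=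
    (convex_halfSpace_re_gt 0).linear_preimage ((LinearMap.mulRight ℂ u).restrictScalars ℝ)
  have : 0 < ((0 : ℂ) * u).re := convexHull_min h hconv h0
  simp at this

theorem distinguishable_implies_markable (d : ℕ) (θ Θ : Fin d → ℝ)
    (h : (0 : ℂ) ∈ convexHull ℝ
      {z : ℂ | ∃ i j, z = Complex.exp (Complex.I * (θ i + Θ j))}) :
    (0 : ℂ) ∈ convexHull ℝ
      {z : ℂ | ∃ i j, z = Complex.exp (Complex.I * (θ i - θ j))} ∨
    (0 : ℂ) ∈ convexHull ℝ
      {z : ℂ | ∃ i j, z = Complex.exp (Complex.I * (Θ i - Θ j))} := by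
  by_contra! hcon
  obtain ⟨a, ha⟩ := exists_forall_cos_pi_div_four_lt_cos_sub_of_cos_sub_pos θ
    (cos_sub_pos_of_zero_notMem_convexHull θ hcon.1)
  obtain ⟨b, hb⟩ := exists_forall_cos_pi_div_four_lt_cos_sub_of_cos_sub_pos Θ
    (cos_sub_pos_of_zero_notMem_convexHull Θ hcon.2)
  refine zero_notMem_convexHull_of_re_mul_pos (exp (-(I * (a + b)))) ?_ h
  rintro _ ⟨i, j, rfl⟩
  have hphase : I * (θ i + Θ j) + -(I * (a + b)) = I * ((θ i - a + (Θ j - b) : ℝ) : ℂ) := by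
    push_cast
    ring
  rw [← Complex.exp_add, hphase, re_exp_I_mul_ofReal]
  exact cos_add_pos_of_cos_pi_div_four_lt (ha i) (hb j)
end

section
/- There exist real numbers α₁, α₂, α₃, α₄ ≥ 0 with α₁+α₂+α₃+α₄ < π and α₁+α₃ > π/2 such that: (a) 0 is not in the convex hull of {1, e^{-i(α₁+α₃)}, e^{-i(α₂+α₄)}, e^{-i(α₁+α₂+α₃+α₄)}}, and (b) 0 is in the convex hull of {1, e^{i(α₁+α₃)}, e^{-i(α₁+α₃)}}. -/
open Complex Real

theorem exists_indistinguishable_markable :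
    ∃ α₁ α₂ α₃ α₄ : ℝ, 0 ≤ α₁ ∧ 0 ≤ α₂ ∧ 0 ≤ α₃ ∧ 0 ≤ α₄ ∧
      α₁ + α₂ + α₃ + α₄ < π ∧ π / 2 < α₁ + α₃ ∧
      (0 : ℂ) ∉ convexHull ℝ
        ({1, Complex.exp (-Complex.I * (α₁ + α₃)),
          Complex.exp (-Complex.I * (α₂ + α₄)),
          Complex.exp (-Complex.I * (α₁ + α₂ + α₃ + α₄))} : Set ℂ) ∧
      (0 : ℂ) ∈ convexHull ℝ
        ({1, Complex.exp (Complex.I * (α₁ + α₃)),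
          Complex.exp (-Complex.I * (α₁ + α₃))} : Set ℂ) := by
  have hpi : (0:ℝ) < π := Real.pi_pos
  refine ⟨2 * π / 3, 0, 0, 0, by positivity, le_refl 0, le_refl 0, le_refl 0,
    by linarith, by linarith, ?_, ?_⟩
  · -- 0 ∉ convexHull of the four points
    have hcos : Real.cos (2 * π / 3) = -(1/2) := by
      have : (2 * π / 3 : ℝ) = π - π / 3 := by ring
      rw [this, Real.cos_pi_sub, Real.cos_pi_div_three]
    have hsin : Real.sin (2 * π / 3) = Real.sqrt 3 / 2 := by
      have : (2 * π / 3 : ℝ) = π - π / 3 := by ring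
      rw [this, Real.sin_pi_sub, Real.sin_pi_div_three]
    set f : ℂ →ₗ[ℝ] ℝ := Complex.reLm - (Real.sqrt 3) • Complex.imLm with hf
    have hfval : ∀ w : ℂ, f w = w.re - Real.sqrt 3 * w.im := by
      intro w; simp [hf]
    have hconv : Convex ℝ {w : ℂ | f w = 1} := convex_hyperplane f.isLinear 1
    have hz : Complex.exp (-Complex.I * ((2 * π / 3 : ℝ) + (0:ℝ))) =
        Complex.exp ((-(2 * π / 3) : ℝ) * Complex.I) := by
      push_cast; ring_nf
    have hzre : (Complex.exp ((-(2 * π / 3) : ℝ) * Complex.I)).re = -(1/2) := by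
      rw [Complex.exp_ofReal_mul_I_re, Real.cos_neg, hcos]
    have hzim : (Complex.exp ((-(2 * π / 3) : ℝ) * Complex.I)).im = -(Real.sqrt 3 / 2) := by
      rw [Complex.exp_ofReal_mul_I_im, Real.sin_neg, hsin]
    have hsq : Real.sqrt 3 * Real.sqrt 3 = 3 :=
      Real.mul_self_sqrt (by norm_num)
    have hsub : ({1, Complex.exp (-Complex.I * ((2 * π / 3 : ℝ) + (0:ℝ))),
          Complex.exp (-Complex.I * ((0:ℝ) + (0:ℝ))),
          Complex.exp (-Complex.I * ((2 * π / 3 : ℝ) + (0:ℝ) + (0:ℝ) + (0:ℝ)))} : Set ℂ)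
        ⊆ {w : ℂ | f w = 1} := by
      intro w hw
      have h2 : Complex.exp (-Complex.I * ((2 * π / 3 : ℝ) + (0:ℝ) + (0:ℝ) + (0:ℝ))) =
          Complex.exp ((-(2 * π / 3) : ℝ) * Complex.I) := by
        push_cast; ring_nf
      rcases hw with h | h | h | h
      · simp [h, hfval]
      · rw [h, hz]
        show f _ = 1
        rw [hfval, hzre, hzim]
        nlinarith [hsq]
      · rw [h]
        have : Complex.exp (-Complex.I * ((0:ℝ) + (0:ℝ))) = 1 := by
          norm_num
        rw [this]; simp [hfval]
      · rw [h, h2]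
        show f _ = 1
        rw [hfval, hzre, hzim]
        nlinarith [hsq]
    intro h0
    have := convexHull_min hsub hconv h0
    simp [hfval] at this
  · -- 0 ∈ convexHull of {1, ω, ω̄}
    set S : Set ℂ := {1, Complex.exp (Complex.I * ((2 * π / 3 : ℝ) + (0:ℝ))),
        Complex.exp (-Complex.I * ((2 * π / 3 : ℝ) + (0:ℝ)))} with hS
    have h1 : (1:ℂ) ∈ convexHull ℝ S := subset_convexHull ℝ S (by simp [hS])
    have hω : Complex.exp (Complex.I * ((2 * π / 3 : ℝ) + (0:ℝ))) ∈ convexHull ℝ S :=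
      subset_convexHull ℝ S (by simp [hS])
    have hω' : Complex.exp (-Complex.I * ((2 * π / 3 : ℝ) + (0:ℝ))) ∈ convexHull ℝ S :=
      subset_convexHull ℝ S (by simp [hS])
    have hc := convex_convexHull ℝ S
    have hm := hc hω hω' (by norm_num : (0:ℝ) ≤ 1/2) (by norm_num : (0:ℝ) ≤ 1/2)
      (by norm_num)
    have hfin := hc h1 hm (by norm_num : (0:ℝ) ≤ 1/3) (by norm_num : (0:ℝ) ≤ 2/3)
      (by norm_num)
    have hsum : Complex.exp (Complex.I * ((2 * π / 3 : ℝ) + (0:ℝ))) +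
        Complex.exp (-Complex.I * ((2 * π / 3 : ℝ) + (0:ℝ))) = -1 := by
      have e1 : Complex.I * ((2 * π / 3 : ℝ) + (0:ℝ)) = ((2 * π / 3 : ℝ) : ℂ) * Complex.I := by
        push_cast; ring
      have e2 : -Complex.I * ((2 * π / 3 : ℝ) + (0:ℝ)) = ((-(2 * π / 3) : ℝ) : ℂ) * Complex.I := by
        push_cast; ring
      rw [e1, e2, Complex.exp_mul_I, Complex.exp_mul_I]
      have hcos : Real.cos (2 * π / 3) = -(1/2) := by
        have : (2 * π / 3 : ℝ) = π - π / 3 := by ring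
        rw [this, Real.cos_pi_sub, Real.cos_pi_div_three]
      have hc1 : Complex.cos ((2 * π / 3 : ℝ) : ℂ) = ((-(1/2) : ℝ) : ℂ) := by
        rw [← Complex.ofReal_cos, hcos]
      have hc2 : Complex.cos ((-(2 * π / 3) : ℝ) : ℂ) = ((-(1/2) : ℝ) : ℂ) := by
        rw [← Complex.ofReal_cos, Real.cos_neg, hcos]
      have hs2 : Complex.sin ((-(2 * π / 3) : ℝ) : ℂ) = -Complex.sin ((2 * π / 3 : ℝ) : ℂ) := by
        rw [← Complex.ofReal_sin, ← Complex.ofReal_sin, Real.sin_neg, Complex.ofReal_neg]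
      rw [hc1, hc2, hs2]
      push_cast; ring
    have h0 : (0:ℂ) = (1/3 : ℝ) • (1:ℂ) +
        (2/3 : ℝ) • ((1/2 : ℝ) • Complex.exp (Complex.I * ((2 * π / 3 : ℝ) + (0:ℝ))) +
          (1/2 : ℝ) • Complex.exp (-Complex.I * ((2 * π / 3 : ℝ) + (0:ℝ)))) := by
      simp only [smul_add, smul_smul, Complex.real_smul]
      push_cast at hsum ⊢
      ring_nf at hsum ⊢
      linear_combination (-1/3 : ℂ) * hsum
    rw [h0]
    exact hfin
end

section
/- The six vectors obtained by applying the operators σ₁⊗σ₂⊗σ₃ (over all permutations (σ₁,σ₂,σ₃) of (I, Z, X)) to the probe state |0⟩⊗|+⟩⊗|0⟩ ∈ (ℂ²)^⊗3 take exactly five distinct values, and among these five vectors, the duplicated value occurs precisely for the permutations (I,X,Z) and (Z,X,I); moreover the five distinct resulting vectors are pairwise orthogonal. -/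
open Complex Matrix Kronecker

noncomputable def sc : ℂ := ((Real.sqrt 2)⁻¹ : ℝ)

noncomputable def v0 : Fin 2 × Fin 2 × Fin 2 → ℂ :=
  fun p => if p.1 = 0 ∧ p.2.2 = 1 then (if p.2.1 = 0 then sc else -sc) else 0
noncomputable def v1 : Fin 2 × Fin 2 × Fin 2 → ℂ :=
  fun p => if p.1 = 0 ∧ p.2.2 = 0 then sc else 0
noncomputable def v2 : Fin 2 × Fin 2 × Fin 2 → ℂ :=
  fun p => if p.1 = 0 ∧ p.2.2 = 1 then sc else 0
noncomputable def v4 : Fin 2 × Fin 2 × Fin 2 → ℂ :=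
  fun p => if p.1 = 1 ∧ p.2.2 = 0 then sc else 0
noncomputable def v5 : Fin 2 × Fin 2 × Fin 2 → ℂ :=
  fun p => if p.1 = 1 ∧ p.2.2 = 0 then (if p.2.1 = 0 then sc else -sc) else 0

lemma sc_ne : sc ≠ 0 := by
  simp [sc, Real.sqrt_eq_zero']


lemma neg_sc_ne : ¬ (-sc = sc) := by
  intro h
  apply sc_ne
  linear_combination -h / 2

lemma sc_ne_neg : ¬ (sc = -sc) := fun h => neg_sc_ne h.symm

lemma six_val0 {α : Type*} (a b c d e g : α) : ![a,b,c,d,e,g] 0 = a := rfl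
lemma six_val1 {α : Type*} (a b c d e g : α) : ![a,b,c,d,e,g] 1 = b := rfl
lemma six_val2 {α : Type*} (a b c d e g : α) : ![a,b,c,d,e,g] 2 = c := rfl
lemma six_val3 {α : Type*} (a b c d e g : α) : ![a,b,c,d,e,g] 3 = d := rfl
lemma six_val4 {α : Type*} (a b c d e g : α) : ![a,b,c,d,e,g] 4 = e := rfl
lemma six_val5 {α : Type*} (a b c d e g : α) : ![a,b,c,d,e,g] 5 = g := rfl
lemma six_valm0 {α : Type*} (a b c d e g : α) (h : 0 < 6) : ![a,b,c,d,e,g] ⟨0,h⟩ = a := rfl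
lemma six_valm1 {α : Type*} (a b c d e g : α) (h : 1 < 6) : ![a,b,c,d,e,g] ⟨1,h⟩ = b := rfl
lemma six_valm2 {α : Type*} (a b c d e g : α) (h : 2 < 6) : ![a,b,c,d,e,g] ⟨2,h⟩ = c := rfl
lemma six_valm3 {α : Type*} (a b c d e g : α) (h : 3 < 6) : ![a,b,c,d,e,g] ⟨3,h⟩ = d := rfl
lemma six_valm4 {α : Type*} (a b c d e g : α) (h : 4 < 6) : ![a,b,c,d,e,g] ⟨4,h⟩ = e := rfl
lemma six_valm5 {α : Type*} (a b c d e g : α) (h : 5 < 6) : ![a,b,c,d,e,g] ⟨5,h⟩ = g := rfl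

set_option maxHeartbeats 4000000 in
theorem six_outputs_five_distinct_orthogonal :
    let X : Matrix (Fin 2) (Fin 2) ℂ := !![0, 1; 1, 0]
    let Z : Matrix (Fin 2) (Fin 2) ℂ := !![1, 0; 0, -1]
    let I₂ : Matrix (Fin 2) (Fin 2) ℂ := 1
    let probe : Fin 2 × Fin 2 × Fin 2 → ℂ :=
      fun p => if p.1 = 0 ∧ p.2.2 = 0 then ((Real.sqrt 2)⁻¹ : ℝ) else 0
    -- outputs for permutations (I,Z,X), (I,X,Z), (Z,I,X), (Z,X,I), (X,I,Z), (X,Z,I)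
    let f : Fin 6 → (Fin 2 × Fin 2 × Fin 2 → ℂ) :=
      ![(I₂ ⊗ₖ (Z ⊗ₖ X)) *ᵥ probe,
        (I₂ ⊗ₖ (X ⊗ₖ Z)) *ᵥ probe,
        (Z ⊗ₖ (I₂ ⊗ₖ X)) *ᵥ probe,
        (Z ⊗ₖ (X ⊗ₖ I₂)) *ᵥ probe,
        (X ⊗ₖ (I₂ ⊗ₖ Z)) *ᵥ probe,
        (X ⊗ₖ (Z ⊗ₖ I₂)) *ᵥ probe]
    -- the duplicated value occurs precisely for permutations (I,X,Z) and (Z,X,I)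
    (f 1 = f 3) ∧
    (∀ i j : Fin 6, f i = f j → i = j ∨ (i = 1 ∧ j = 3) ∨ (i = 3 ∧ j = 1)) ∧
    -- the five distinct resulting vectors are pairwise orthogonal
    (∀ i j : Fin 6, f i ≠ f j → star (f i) ⬝ᵥ f j = 0) := by
  intro X Z I₂ probe f
  have key : ∀ (M : Matrix (Fin 2 × Fin 2 × Fin 2) (Fin 2 × Fin 2 × Fin 2) ℂ)
      (w : Fin 2 × Fin 2 × Fin 2 → ℂ),
      (∀ a b c, (M *ᵥ probe) (a, b, c) = w (a, b, c)) → M *ᵥ probe = w := by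
    intro M w hw
    funext ⟨a, b, c⟩
    exact hw a b c
  have e0 : (I₂ ⊗ₖ (Z ⊗ₖ X)) *ᵥ probe = v0 := by
    apply key; intro a b c; fin_cases a <;> fin_cases b <;> fin_cases c <;>
      simp [I₂, Z, X, probe, v0, sc, Matrix.mulVec, dotProduct,
        Fintype.sum_prod_type, Fin.sum_univ_two, Matrix.kroneckerMap_apply, Matrix.one_apply]
  have e1 : (I₂ ⊗ₖ (X ⊗ₖ Z)) *ᵥ probe = v1 := by
    apply key; intro a b c; fin_cases a <;> fin_cases b <;> fin_cases c <;>
      simp [I₂, Z, X, probe, v1, sc, Matrix.mulVec, dotProduct,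
        Fintype.sum_prod_type, Fin.sum_univ_two, Matrix.kroneckerMap_apply, Matrix.one_apply]
  have e2 : (Z ⊗ₖ (I₂ ⊗ₖ X)) *ᵥ probe = v2 := by
    apply key; intro a b c; fin_cases a <;> fin_cases b <;> fin_cases c <;>
      simp [I₂, Z, X, probe, v2, sc, Matrix.mulVec, dotProduct,
        Fintype.sum_prod_type, Fin.sum_univ_two, Matrix.kroneckerMap_apply, Matrix.one_apply]
  have e3 : (Z ⊗ₖ (X ⊗ₖ I₂)) *ᵥ probe = v1 := by
    apply key; intro a b c; fin_cases a <;> fin_cases b <;> fin_cases c <;>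
      simp [I₂, Z, X, probe, v1, sc, Matrix.mulVec, dotProduct,
        Fintype.sum_prod_type, Fin.sum_univ_two, Matrix.kroneckerMap_apply, Matrix.one_apply]
  have e4 : (X ⊗ₖ (I₂ ⊗ₖ Z)) *ᵥ probe = v4 := by
    apply key; intro a b c; fin_cases a <;> fin_cases b <;> fin_cases c <;>
      simp [I₂, Z, X, probe, v4, sc, Matrix.mulVec, dotProduct,
        Fintype.sum_prod_type, Fin.sum_univ_two, Matrix.kroneckerMap_apply, Matrix.one_apply]
  have e5 : (X ⊗ₖ (Z ⊗ₖ I₂)) *ᵥ probe = v5 := by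
    apply key; intro a b c; fin_cases a <;> fin_cases b <;> fin_cases c <;>
      simp [I₂, Z, X, probe, v5, sc, Matrix.mulVec, dotProduct,
        Fintype.sum_prod_type, Fin.sum_univ_two, Matrix.kroneckerMap_apply, Matrix.one_apply]
  have hfg : f = ![v0, v1, v2, v1, v4, v5] := by
    funext i
    fin_cases i <;> simp only [f, Fin.isValue, six_val0, six_val1, six_val2, six_val3,
      six_val4, six_val5] <;>
      first | exact e0 | exact e1 | exact e2 | exact e3 | exact e4 | exact e5
  rw [hfg]
  refine ⟨rfl, ?_, ?_⟩
  · intro i j h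
    fin_cases i <;> fin_cases j <;>
      simp only [Fin.isValue, six_val0, six_val1, six_val2, six_val3, six_val4, six_val5, six_valm0, six_valm1, six_valm2, six_valm3, six_valm4, six_valm5] at h <;>
      first
        | decide
        | (exfalso
           have h1 := congrFun h (0, 0, 0)
           have h2 := congrFun h (0, 1, 1)
           have h3 := congrFun h (1, 1, 0)
           simp [v0, v1, v2, v4, v5, sc_ne, neg_sc_ne, sc_ne_neg] at h1 h2 h3)
  · intro i j h
    fin_cases i <;> fin_cases j <;>
      simp only [Fin.isValue, six_val0, six_val1, six_val2, six_val3, six_val4, six_val5, six_valm0, six_valm1, six_valm2, six_valm3, six_valm4, six_valm5] at h ⊢ <;>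
      first
        | exact absurd rfl h
        | (simp [v0, v1, v2, v4, v5, sc, dotProduct, Fintype.sum_prod_type,
             Fin.sum_univ_two, Complex.conj_ofReal] <;> ring)
end
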